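/- Let γ : [0,1] → ℝ³ be a continuous curve, 0 = t₀ < t₁ < ⋯ < t_m = 1 a partition, and C₁,…,C_m convex subsets of ℝ³ with γ([t_{k−1}, t_k]) ⊆ C_k for each k. Let S ⊆ ℝ³ be a set with C_k ∩ S = ∅ for every k. Let P be the inscribed polyline of γ (piecewise-linear, agreeing with γ at each t_k), and H(s,t) = (1−s)•γ(t) + s•P(t) the straight-line homotopy. Then H(s,t) ∉ S for all s, t ∈ [0,1]; that is, the deformation of γ to its polyline never touches S. -/
import Mathlib

lemma exists_subinterval (m : ℕ) (hm : 0 < m) (t : ℕ → ℝ)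
    (ht0 : t 0 = 0) (htm : t m = 1) (x : ℝ) (hx : x ∈ Set.Icc (0:ℝ) 1) :
    ∃ k < m, x ∈ Set.Icc (t k) (t (k + 1)) := by
  by_contra h
  push_neg at h
  have key : ∀ k ≤ m, t k ≤ x := by
    intro k hk
    induction k with
    | zero => simpa [ht0] using hx.1
    | succ n ih =>
      have hn : n < m := Nat.lt_of_succ_le hk
      have h1 := ih (le_of_lt hn)
      have h2 := h n hn
      simp only [Set.mem_Icc, not_and, not_le] at h2
      exact le_of_lt (h2 h1)
  have hxm : x = 1 := le_antisymm hx.2 (htm ▸ key m le_rfl)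
  have hm1 : m - 1 < m := Nat.sub_lt hm one_pos
  apply h (m - 1) hm1
  have : m - 1 + 1 = m := Nat.succ_pred_eq_of_pos hm
  constructor
  · exact key (m - 1) (le_of_lt hm1)
  · rw [this, htm, hxm]

/-- **Deforming one loop to its inscribed polyline inside convex bounding volumes
disjoint from a set `S` never touches `S`.** If `γ` is a continuous curve on `[0,1]`
with a partition `t`, convex sets `C k ⊇ γ [t k, t (k+1)]` each disjoint from `S`, and
`P` is the inscribed polyline (affine on each subinterval, agreeing with `γ` at the
partition points), then the straight-line homotopy `H (s, x) = (1-s) • γ x + s • P x`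
never touches `S`. -/
theorem stmt_2 (m : ℕ) (hm : 0 < m)
    (γ : ℝ → EuclideanSpace ℝ (Fin 3))
    (hγ : ContinuousOn γ (Set.Icc 0 1))
    (t : ℕ → ℝ)
    (ht0 : t 0 = 0) (htm : t m = 1) (htmono : ∀ k < m, t k < t (k + 1))
    (C : ℕ → Set (EuclideanSpace ℝ (Fin 3)))
    (hCconv : ∀ k < m, Convex ℝ (C k))
    (hγC : ∀ k < m, γ '' Set.Icc (t k) (t (k + 1)) ⊆ C k)
    (S : Set (EuclideanSpace ℝ (Fin 3)))
    (hdisj : ∀ k < m, C k ∩ S = ∅)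
    (P : ℝ → EuclideanSpace ℝ (Fin 3))
    (hP : ∀ k < m, ∀ x ∈ Set.Icc (t k) (t (k + 1)),
      P x = γ (t k) + ((x - t k) / (t (k + 1) - t k)) • (γ (t (k + 1)) - γ (t k))) :
    ∀ s ∈ Set.Icc (0:ℝ) 1, ∀ x ∈ Set.Icc (0:ℝ) 1,
      (1 - s) • γ x + s • P x ∉ S := by
  intro s hs x hx hmem
  obtain ⟨k, hk, hxk⟩ := exists_subinterval m hm t ht0 htm x hx
  have hγx : γ x ∈ C k := hγC k hk ⟨x, hxk, rfl⟩
  have hγa : γ (t k) ∈ C k := hγC k hk ⟨t k, ⟨le_rfl, le_of_lt (htmono k hk)⟩, rfl⟩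
  have hγb : γ (t (k+1)) ∈ C k := hγC k hk ⟨t (k+1), ⟨le_of_lt (htmono k hk), le_rfl⟩, rfl⟩
  have hden : (0:ℝ) < t (k+1) - t k := sub_pos.mpr (htmono k hk)
  set r : ℝ := (x - t k) / (t (k + 1) - t k) with hr
  have hr0 : 0 ≤ r := div_nonneg (sub_nonneg.mpr hxk.1) (le_of_lt hden)
  have hr1 : r ≤ 1 := by
    rw [hr, div_le_one hden]
    linarith [hxk.2]
  have hPx : P x ∈ C k := by
    rw [hP k hk x hxk]
    have := (hCconv k hk) hγa hγb (by linarith : (0:ℝ) ≤ 1 - r) hr0 (by ring)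
    convert this using 1
    module
  have hH : (1 - s) • γ x + s • P x ∈ C k :=
    (hCconv k hk) hγx hPx (by linarith [hs.2]) hs.1 (by ring)
  have := hdisj k hk
  exact absurd (Set.mem_inter hH hmem) (by rw [this]; exact Set.notMem_empty _)
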